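/- Let G₁ and G₂ be connected simple graphs, each on n vertices with m edges, with Laplacian spectra μ₁ ≥ μ₂ ≥ ⋯ ≥ μ_{n−1} > μ_n = 0 and λ₁ ≥ λ₂ ≥ ⋯ ≥ λ_{n−1} > λ_n = 0 respectively. If p is a positive integer such that 2m/(p+n) < min(μ_{n−1}, λ_{n−1}), then LE(G₁ ∪ K̄_p) = LE(G₂ ∪ K̄_p). -/

import Mathlib

open SimpleGraph Matrix Finset

/-- The number of edges of a simple graph. -/
noncomputable def edgeCount {V : Type*} (G : SimpleGraph V) : ℕ := G.edgeSet.ncard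

/-- The Laplacian spectrum of a finite simple graph, as a multiset of real numbers. -/
noncomputable def lapSpec {V : Type*} [Fintype V] (G : SimpleGraph V) : Multiset ℝ := by
  classical
  exact Finset.univ.val.map (G.posSemidef_lapMatrix ℝ).1.eigenvalues

/-- The signless Laplacian matrix `D + A` is Hermitian. -/
theorem signless_isHermitian {V : Type*} [Fintype V] [DecidableEq V] (G : SimpleGraph V)
    [DecidableRel G.Adj] : (G.degMatrix ℝ + G.adjMatrix ℝ).IsHermitian := by
  rw [Matrix.IsHermitian, conjTranspose_eq_transpose_of_trivial]
  exact Matrix.IsSymm.add (G.isSymm_degMatrix ℝ) (isSymm_adjMatrix G)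

/-- The signless Laplacian spectrum of a finite simple graph, as a multiset of reals. -/
noncomputable def signlessLapSpec {V : Type*} [Fintype V] (G : SimpleGraph V) : Multiset ℝ := by
  classical
  exact Finset.univ.val.map (signless_isHermitian G).eigenvalues

/-- The Laplacian energy `LE(G) = ∑ |μ_i - 2m/n|`. -/
noncomputable def lapEnergy {V : Type*} [Fintype V] (G : SimpleGraph V) : ℝ :=
  ((lapSpec G).map (fun x => |x - 2 * (edgeCount G : ℝ) / (Fintype.card V : ℝ)|)).sum

/-- The signless Laplacian energy `LE⁺(G) = ∑ |μ⁺_i - 2m/n|`. -/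
noncomputable def signlessLapEnergy {V : Type*} [Fintype V] (G : SimpleGraph V) : ℝ :=
  ((signlessLapSpec G).map (fun x => |x - 2 * (edgeCount G : ℝ) / (Fintype.card V : ℝ)|)).sum

/-- The join `G ∨ H` of two graphs: disjoint union plus all edges between them. -/
def SimpleGraph.join {V W : Type*} (G : SimpleGraph V) (H : SimpleGraph W) :
    SimpleGraph (V ⊕ W) where
  Adj a b :=
    match a, b with
    | Sum.inl u, Sum.inl v => G.Adj u v
    | Sum.inr u, Sum.inr v => H.Adj u v
    | Sum.inl _, Sum.inr _ => True
    | Sum.inr _, Sum.inl _ => True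
  symm := ⟨by rintro (u | u) (v | v) h <;> simp_all [adj_comm]⟩
  loopless := ⟨by rintro (u | u) h <;> simp_all⟩

/-- The tensor (Kronecker) product `G ⊗ H` of two graphs. -/
def SimpleGraph.tensorProd {V W : Type*} (G : SimpleGraph V) (H : SimpleGraph W) :
    SimpleGraph (V × W) where
  Adj a b := G.Adj a.1 b.1 ∧ H.Adj a.2 b.2
  symm := ⟨fun a b h => ⟨G.adj_symm h.1, H.adj_symm h.2⟩⟩
  loopless := ⟨fun a h => G.irrefl h.1⟩

/-
The Laplacian spectrum of `G ∪ K̄_p` is that of `G` together with `p` extra zeros, so its mean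
is `c = 2m/(n+p)`. When `c` lies below the algebraic connectivity of `G`, every eigenvalue is
either `0` or at least `c`; the spectrum then sums to `2m = (n+p)c` and has exactly `p+1` zeros, which
gives `LE(G ∪ K̄_p) = ∑ (μ - c) + 2c·#zeros = 2(p+1)c`, a value independent of `G`.
-/

open Polynomial

namespace SimpleGraph

variable {V W : Type*}

lemma lapMatrix_sum [Fintype V] [Fintype W] [DecidableEq V] [DecidableEq W]
    (G : SimpleGraph V) (H : SimpleGraph W) [DecidableRel G.Adj] [DecidableRel H.Adj]
    [DecidableRel (G ⊕g H).Adj] :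
    (G ⊕g H).lapMatrix ℝ = fromBlocks (G.lapMatrix ℝ) 0 0 (H.lapMatrix ℝ) := by
  ext (v | w) (v' | w') <;>
    simp only [lapMatrix, degMatrix, Matrix.sub_apply, Matrix.diagonal_apply, degree_eq_sum_if_adj,
      Fintype.sum_sum_type] <;>
    simp [Matrix.diagonal_apply]

lemma lapMatrix_bot [Fintype V] [DecidableEq V] : (⊥ : SimpleGraph V).lapMatrix ℝ = 0 := by
  ext v w
  simp [lapMatrix, degMatrix]

lemma edgeCount_sum [Finite V] [Finite W] (G : SimpleGraph V) (H : SimpleGraph W) :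
    edgeCount (G ⊕g H) = edgeCount G + edgeCount H := by
  simp only [edgeCount, ← Nat.card_coe_set_eq]
  rw [Nat.card_congr edgeSetSumEquiv, Nat.card_sum]

lemma edgeCount_bot : edgeCount (⊥ : SimpleGraph V) = 0 := by
  simp [edgeCount]

lemma lapSpec_eq_roots_charpoly [Fintype V] [DecidableEq V] (G : SimpleGraph V)
    [DecidableRel G.Adj] : lapSpec G = (G.lapMatrix ℝ).charpoly.roots := by
  have : lapSpec G = univ.val.map (G.posSemidef_lapMatrix ℝ).1.eigenvalues := by
    unfold lapSpec
    congr!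
  rw [this, (G.posSemidef_lapMatrix ℝ).1.roots_charpoly_eq_eigenvalues]
  simp

lemma sum_lapSpec [Fintype V] (G : SimpleGraph V) : (lapSpec G).sum = 2 * edgeCount G := by
  classical
  have h := (G.posSemidef_lapMatrix ℝ).1.trace_eq_sum_eigenvalues
  simp only [RCLike.ofReal_real_eq_id, id] at h
  rw [lapSpec, ← Finset.sum_eq_multiset_sum, ← h, lapMatrix, trace_sub, trace_adjMatrix, sub_zero,
    degMatrix, trace_diagonal, ← Nat.cast_sum, sum_degrees_eq_twice_card_edges, edgeCount,
    ← coe_edgeFinset, Set.ncard_coe_finset]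
  push_cast
  ring

lemma lapSpec_sum [Fintype V] [Fintype W] (G : SimpleGraph V) (H : SimpleGraph W) :
    lapSpec (G ⊕g H) = lapSpec G + lapSpec H := by
  classical
  rw [lapSpec_eq_roots_charpoly, lapSpec_eq_roots_charpoly, lapSpec_eq_roots_charpoly,
    lapMatrix_sum, charpoly_fromBlocks_zero₁₂,
    roots_mul (mul_ne_zero (charpoly_monic _).ne_zero (charpoly_monic _).ne_zero)]

lemma lapSpec_bot [Fintype V] : lapSpec (⊥ : SimpleGraph V) = .replicate (Fintype.card V) 0 := by
  classical
  rw [lapSpec_eq_roots_charpoly, lapMatrix_bot, charpoly_zero, roots_pow, roots_X,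
    Multiset.nsmul_singleton]

lemma card_lapSpec [Fintype V] (G : SimpleGraph V) :
    Multiset.card (lapSpec G) = Fintype.card V := by
  simp [lapSpec]

lemma lapEnergy_eq_sum_abs_sub_mean [Fintype V] (G : SimpleGraph V) :
    lapEnergy G = ((lapSpec G).map fun x =>
      |x - (lapSpec G).sum / Multiset.card (lapSpec G)|).sum := by
  rw [lapEnergy, sum_lapSpec, card_lapSpec]

end SimpleGraph

namespace Multiset

lemma sum_map_abs_sub_of_forall_eq_zero_or_le {s : Multiset ℝ} {c : ℝ} (hc : 0 ≤ c)
    (hs : ∀ x ∈ s, x = 0 ∨ c ≤ x) :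
    (s.map fun x => |x - c|).sum = s.sum - card s * c + 2 * count 0 s * c := by
  induction s using Multiset.induction_on with
  | empty => simp
  | cons a s ih =>
    rw [forall_mem_cons] at hs
    rw [map_cons, sum_cons, ih hs.2, sum_cons, card_cons, count_cons]
    by_cases ha : a = 0
    · subst ha
      simp only [zero_sub, abs_neg, abs_of_nonneg hc]
      push_cast
      ring
    · rw [abs_of_nonneg (sub_nonneg.mpr (hs.1.resolve_left ha)), if_neg (Ne.symm ha)]
      push_cast
      ring

lemma sum_map_abs_sub_mean_of_forall_eq_zero_or_le {s : Multiset ℝ} (hs₀ : 0 ≤ s.sum)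
    (hs : ∀ x ∈ s, x = 0 ∨ s.sum / card s ≤ x) :
    (s.map fun x => |x - s.sum / card s|).sum = 2 * count 0 s * (s.sum / card s) := by
  rw [sum_map_abs_sub_of_forall_eq_zero_or_le (by positivity) hs]
  rcases eq_or_ne s 0 with rfl | hne
  · simp
  · have : (card s : ℝ) ≠ 0 := by simpa using hne
    field_simp
    ring

end Multiset

lemma Antitone.apply_penultimate_le {n : ℕ} (hn : 2 ≤ n) {μ : Fin n → ℝ} (hμ : Antitone μ)
    {i : Fin n} (hi : (i : ℕ) ≠ n - 1) : μ ⟨n - 2, by omega⟩ ≤ μ i :=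
  hμ (Fin.le_def.mpr (by simp only; omega))

lemma count_zero_map_univ_eq_one {n : ℕ} (hn : 2 ≤ n) {μ : Fin n → ℝ} (hμ : Antitone μ)
    (hlast : μ ⟨n - 1, by omega⟩ = 0) (hpos : 0 < μ ⟨n - 2, by omega⟩) :
    (univ.val.map μ).count 0 = 1 := by
  rw [Multiset.count_map, ← Finset.filter_val, Finset.card_val, Finset.card_eq_one]
  refine ⟨⟨n - 1, by omega⟩, Finset.ext fun i => ?_⟩
  simp only [Finset.mem_filter, Finset.mem_univ, true_and, Finset.mem_singleton]
  constructor
  · intro hi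
    by_contra hne
    have := hμ.apply_penultimate_le hn (fun h => hne (Fin.ext h))
    linarith
  · rintro rfl
    exact hlast.symm

lemma lapEnergy_sum_bot_of_antitone {n p : ℕ} (hn : 2 ≤ n) (G : SimpleGraph (Fin n))
    {μ : Fin n → ℝ} (hμ : Antitone μ) (hspec : lapSpec G = univ.val.map μ)
    (hlast : μ ⟨n - 1, by omega⟩ = 0)
    (hgap : 2 * (edgeCount G : ℝ) / (n + p) < μ ⟨n - 2, by omega⟩) :
    lapEnergy (G ⊕g (⊥ : SimpleGraph (Fin p))) =
      2 * (1 + p) * (2 * (edgeCount G : ℝ) / (n + p)) := by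
  set c := 2 * (edgeCount G : ℝ) / (n + p)
  rw [lapEnergy_eq_sum_abs_sub_mean]
  set s := lapSpec (G ⊕g (⊥ : SimpleGraph (Fin p))) with hs_def
  have hs : s = univ.val.map μ + .replicate p 0 := by
    rw [hs_def, lapSpec_sum, lapSpec_bot, hspec, Fintype.card_fin]
  have hsum : s.sum = 2 * edgeCount G := by
    rw [hs_def, sum_lapSpec, edgeCount_sum, edgeCount_bot, add_zero]
  have hmean : s.sum / Multiset.card s = c := by
    rw [hsum, hs_def, card_lapSpec, Fintype.card_sum, Fintype.card_fin, Fintype.card_fin,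
      Nat.cast_add]
  have hcount : s.count 0 = 1 + p := by
    rw [hs, Multiset.count_add, Multiset.count_replicate_self,
      count_zero_map_univ_eq_one hn hμ hlast (lt_of_le_of_lt (by positivity) hgap)]
  have hdich : ∀ x ∈ s, x = 0 ∨ c ≤ x := by
    rw [hs]
    intro x hx
    rcases Multiset.mem_add.mp hx with hx | hx
    · obtain ⟨i, -, rfl⟩ := Multiset.mem_map.mp hx
      by_cases hi : (i : ℕ) = n - 1
      · exact .inl ((congrArg μ (Fin.ext hi)).trans hlast)
      · exact .inr (hgap.le.trans (hμ.apply_penultimate_le hn hi))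
    · exact .inl (Multiset.eq_of_mem_replicate hx)
  rw [Multiset.sum_map_abs_sub_mean_of_forall_eq_zero_or_le (by rw [hsum]; positivity)
    (hmean ▸ hdich), hcount, hmean]
  push_cast
  ring

theorem stmt0 (n m p : ℕ) (hn : 2 ≤ n)
    (G₁ G₂ : SimpleGraph (Fin n))
    (hm₁ : edgeCount G₁ = m) (hm₂ : edgeCount G₂ = m)
    (μ ν : Fin n → ℝ) (hμmono : Antitone μ) (hνmono : Antitone ν)
    (hμspec : lapSpec G₁ = Finset.univ.val.map μ)
    (hνspec : lapSpec G₂ = Finset.univ.val.map ν)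
    (hμlast : μ ⟨n - 1, by omega⟩ = 0) (hνlast : ν ⟨n - 1, by omega⟩ = 0)
    (hcond : 2 * (m : ℝ) / ((p : ℝ) + (n : ℝ)) < min (μ ⟨n - 2, by omega⟩) (ν ⟨n - 2, by omega⟩)) :
    lapEnergy (G₁ ⊕g (⊥ : SimpleGraph (Fin p))) = lapEnergy (G₂ ⊕g (⊥ : SimpleGraph (Fin p))) := by
  rw [add_comm] at hcond
  subst hm₁
  rw [lapEnergy_sum_bot_of_antitone hn G₁ hμmono hμspec hμlast (hcond.trans_le (min_le_left _ _)),
    lapEnergy_sum_bot_of_antitone hn G₂ hνmono hνspec hνlast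
      (hm₂ ▸ hcond.trans_le (min_le_right _ _)), hm₂]
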